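/- arXiv:2603.00664 — 4 statements merged into one kernel-verified Lean document; each statement's English description precedes it below -/
import Mathlib

section
/- Every hypergraph H with transversal number τ(H) ≥ 2 admits a transversal coalition partition. -/
open Finset

/-- A set `T` is a transversal of the hypergraph with edge family `E`
if it meets every edge. -/
def IsTransversal {α : Type*} [DecidableEq α] (E : Set (Finset α)) (T : Finset α) : Prop :=
  ∀ e ∈ E, (T ∩ e).Nonempty

/-- A transversal coalition partition of the vertex set `U` of a hypergraph with
edge family `E`: a partition of `U` into nonempty parts, each of which is either a
singleton transversal, or a non-transversal part forming a transversal coalition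
with another (non-transversal) part. -/
def IsTrcPartition {α : Type*} [DecidableEq α] (U : Finset α) (E : Set (Finset α))
    (P : Finset (Finset α)) : Prop :=
  (∀ p ∈ P, p.Nonempty) ∧
  (∀ p ∈ P, ∀ q ∈ P, p ≠ q → Disjoint p q) ∧
  P.biUnion id = U ∧
  ∀ p ∈ P, (∃ v, p = {v} ∧ IsTransversal E p) ∨
    (¬ IsTransversal E p ∧
      ∃ q ∈ P, q ≠ p ∧ ¬ IsTransversal E q ∧ IsTransversal E (p ∪ q))

/-- `TrcNumberIs U E k` says that the transversal coalition number of the hypergraph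
`(U, E)` equals `k`, i.e. `k` is the maximum number of parts of a transversal
coalition partition. -/
def TrcNumberIs {α : Type*} [DecidableEq α] (U : Finset α) (E : Set (Finset α)) (k : ℕ) : Prop :=
  IsGreatest {m | ∃ P : Finset (Finset α), IsTrcPartition U E P ∧ P.card = m} k

/-!
Since `τ(H) ≥ 2`, no singleton is a transversal, so some vertex lies in a maximal non-transversal
set `A`, and `A ≠ U` because `U` is a transversal. By maximality `A ∪ {v}` is a transversal for
every `v ∉ A`, so `A` together with the singletons of `U \ A` is a transversal coalition
partition: each singleton is in coalition with `A`, and `A` with any of them.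
-/

section

variable {α : Type*} [DecidableEq α] {U A : Finset α} {E : Set (Finset α)}

theorem isTransversal_of_forall_subset (hE : ∀ e ∈ E, e.Nonempty ∧ e ⊆ U) :
    IsTransversal E U := fun e he => by
  rw [inter_eq_right.2 (hE e he).2]
  exact (hE e he).1

theorem exists_maximal_not_isTransversal {A₀ : Finset α} (hA₀U : A₀ ⊆ U)
    (hA₀ : ¬ IsTransversal E A₀) :
    ∃ A, A₀ ⊆ A ∧ A ⊆ U ∧ ¬ IsTransversal E A ∧ ∀ v ∈ U \ A, IsTransversal E (insert v A) := by
  have hfin : {A | A ⊆ U ∧ ¬ IsTransversal E A}.Finite :=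
    U.powerset.finite_toSet.subset fun A hA => mem_powerset.2 hA.1
  obtain ⟨A, hA₀A, ⟨hAU, hA⟩, hmax⟩ := hfin.exists_le_maximal ⟨hA₀U, hA₀⟩
  refine ⟨A, hA₀A, hAU, hA, fun v hv => ?_⟩
  rw [mem_sdiff] at hv
  by_contra hvA
  exact hv.2 (hmax ⟨insert_subset hv.1 hAU, hvA⟩ (subset_insert v A) (mem_insert_self v A))

theorem Finpartition.isTrcPartition (P : Finpartition U)
    (h : ∀ p ∈ P.parts, (∃ v, p = {v} ∧ IsTransversal E p) ∨
      (¬ IsTransversal E p ∧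
        ∃ q ∈ P.parts, q ≠ p ∧ ¬ IsTransversal E q ∧ IsTransversal E (p ∪ q))) :
    IsTrcPartition U E P.parts :=
  ⟨fun _ => P.nonempty_of_mem_parts, fun _ hp _ hq => P.disjoint hp hq, P.biUnion_parts, h⟩

theorem exists_isTrcPartition_of_maximal (hAU : A ⊆ U) (hA : A.Nonempty)
    (hAt : ¬ IsTransversal E A) (hmax : ∀ v ∈ U \ A, IsTransversal E (insert v A))
    (hsingle : ∀ v ∈ U \ A, ¬ IsTransversal E {v}) (hUA : (U \ A).Nonempty) :
    ∃ P : Finset (Finset α), IsTrcPartition U E P := by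
  let P : Finpartition U := (⊥ : Finpartition (U \ A)).extend hA.ne_empty
    disjoint_sdiff_self_left (sdiff_union_of_subset hAU)
  have hsingle_ne {v} (hv : v ∈ U \ A) : ({v} : Finset α) ≠ A := by
    rintro rfl
    exact (mem_sdiff.1 hv).2 (mem_singleton_self v)
  refine ⟨P.parts, P.isTrcPartition fun p hp => Or.inr ?_⟩
  rcases mem_insert.1 hp with rfl | hp
  · obtain ⟨v, hv⟩ := hUA
    refine ⟨hAt, {v}, mem_insert_of_mem (Finpartition.mem_bot_iff.2 ⟨v, hv, rfl⟩),
      hsingle_ne hv, hsingle v hv, ?_⟩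
    rw [union_comm, ← insert_eq]
    exact hmax v hv
  · obtain ⟨v, hv, rfl⟩ := Finpartition.mem_bot_iff.1 hp
    refine ⟨hsingle v hv, A, mem_insert_self _ _, (hsingle_ne hv).symm, hAt, ?_⟩
    rw [← insert_eq]
    exact hmax v hv

end

theorem stmt1 {α : Type*} [DecidableEq α] (U : Finset α) (E : Set (Finset α))
    (hE : ∀ e ∈ E, e.Nonempty ∧ e ⊆ U)
    (hτ : ∀ T : Finset α, T ⊆ U → IsTransversal E T → 2 ≤ T.card) :
    ∃ P : Finset (Finset α), IsTrcPartition U E P := by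
  have hU : IsTransversal E U := isTransversal_of_forall_subset hE
  have hsingle (v : α) (hv : v ∈ U) : ¬ IsTransversal E {v} := fun ht => by
    simpa using hτ {v} (singleton_subset_iff.2 hv) ht
  obtain ⟨x, hx⟩ : U.Nonempty := card_pos.1 (by linarith [hτ U subset_rfl hU])
  obtain ⟨A, hxA, hAU, hAt, hmax⟩ :=
    exists_maximal_not_isTransversal (singleton_subset_iff.2 hx) (hsingle x hx)
  have hUA : (U \ A).Nonempty := sdiff_nonempty.2 fun hUA => hAt (hAU.antisymm hUA ▸ hU)
  exact exists_isTrcPartition_of_maximal hAU ⟨x, singleton_subset_iff.1 hxA⟩ hAt hmax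
    (fun v hv => hsingle v (mem_sdiff.1 hv).1) hUA
end

section
/- For the complete bipartite r-uniform hypergraph K_{m,n}^r with r ≥ 3, m, n > 1, and m + n = r + 1, the transversal coalition number is C_τ(K_{m,n}^r) = r + 1. -/
/-!
Since `|U₁ ∪ U₂| = r + 1`, every edge is the vertex set minus a single vertex, and since
`m, n > 1`, every vertex set minus a single vertex is an edge. Hence no vertex is a transversal
while any two vertices are, so the partition into singletons is a transversal coalition
partition with `r + 1` parts, and no partition into nonempty parts has more.
-/

open Finset

section

variable {α : Type*} [DecidableEq α]

theorem IsTrcPartition.card_le {U : Finset α} {E : Set (Finset α)} {P : Finset (Finset α)}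
    (hP : IsTrcPartition U E P) : #P ≤ #U := by
  obtain ⟨hne, hdisj, hcov, -⟩ := hP
  rw [← hcov]
  exact card_le_card_biUnion (fun p hp q hq hpq => hdisj p hp q hq hpq) hne

theorem isTrcPartition_image_singleton {U : Finset α} {E : Set (Finset α)} (hU : 1 < #U)
    (hsing : ∀ v ∈ U, ¬ IsTransversal E {v})
    (hpair : ∀ v ∈ U, ∀ w ∈ U, v ≠ w → IsTransversal E {v, w}) :
    IsTrcPartition U E (U.image singleton) := by
  refine ⟨?_, ?_, by ext; simp, ?_⟩
  · simp
  · simp only [mem_image]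
    rintro _ ⟨v, -, rfl⟩ _ ⟨w, -, rfl⟩ hvw
    exact disjoint_singleton.mpr fun h => hvw (h ▸ rfl)
  · simp only [mem_image]
    rintro _ ⟨v, hv, rfl⟩
    obtain ⟨w, hw, hwv⟩ := exists_mem_ne hU v
    refine .inr ⟨hsing v hv, {w}, ⟨w, hw, rfl⟩, ?_, hsing w hw, hpair v hv w hw hwv.symm⟩
    simpa using hwv

theorem trcNumberIs_card {U : Finset α} {E : Set (Finset α)} (hU : 1 < #U)
    (hsing : ∀ v ∈ U, ¬ IsTransversal E {v})
    (hpair : ∀ v ∈ U, ∀ w ∈ U, v ≠ w → IsTransversal E {v, w}) :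
    TrcNumberIs U E #U :=
  ⟨⟨_, isTrcPartition_image_singleton hU hsing hpair,
      card_image_of_injective _ singleton_injective⟩,
    fun _ ⟨_, hP, hk⟩ => hk ▸ hP.card_le⟩

theorem not_isTransversal_of_disjoint_mem {E : Set (Finset α)} {T e : Finset α} (he : e ∈ E)
    (hTe : Disjoint T e) : ¬ IsTransversal E T :=
  fun hT => (disjoint_iff_inter_eq_empty.mp hTe ▸ hT e he).ne_empty rfl

theorem isTransversal_pair_of_card_lt {U : Finset α} {E : Set (Finset α)}
    (hE : ∀ e ∈ E, e ⊆ U ∧ #U < #e + 2) {v w : α} (hv : v ∈ U) (hw : w ∈ U) (hvw : v ≠ w) :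
    IsTransversal E {v, w} := by
  intro e he
  obtain ⟨heU, hcard⟩ := hE e he
  by_contra hmiss
  have hsub : e ⊆ U \ {v, w} :=
    subset_sdiff.mpr ⟨heU, disjoint_comm.mp (disjoint_iff_inter_eq_empty.mpr
      (not_nonempty_iff_eq_empty.mp hmiss))⟩
  have hpairU : ({v, w} : Finset α) ⊆ U := insert_subset hv (singleton_subset_iff.mpr hw)
  have hle := card_le_card hsub
  have hsplit := card_sdiff_add_card_eq_card hpairU
  rw [card_pair hvw] at hsplit
  omega

def bipartiteEdges (U1 U2 : Finset α) (r : ℕ) : Set (Finset α) :=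
  {e | e ⊆ U1 ∪ U2 ∧ #e = r ∧ (e ∩ U1).Nonempty ∧ (e ∩ U2).Nonempty}

theorem sdiff_singleton_mem_bipartiteEdges {U1 U2 : Finset α} {r : ℕ}
    (h1 : 1 < #U1) (h2 : 1 < #U2) (hcard : #(U1 ∪ U2) = r + 1) {v : α} (hv : v ∈ U1 ∪ U2) :
    (U1 ∪ U2) \ {v} ∈ bipartiteEdges U1 U2 r := by
  have meets {U' : Finset α} (hU' : U' ⊆ U1 ∪ U2) (h : 1 < #U') :
      (((U1 ∪ U2) \ {v}) ∩ U').Nonempty := by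
    obtain ⟨a, ha, hav⟩ := exists_mem_ne h v
    exact ⟨a, mem_inter.mpr ⟨mem_sdiff.mpr ⟨hU' ha, by simpa using hav⟩, ha⟩⟩
  refine ⟨sdiff_subset, ?_, meets subset_union_left h1, meets subset_union_right h2⟩
  rw [card_sdiff_of_subset (singleton_subset_iff.mpr hv), card_singleton, hcard, Nat.add_sub_cancel]

end

theorem stmt11_general {α : Type*} [DecidableEq α] (U1 U2 : Finset α) (m n r : ℕ)
    (hd : Disjoint U1 U2) (h1 : U1.card = m) (h2 : U2.card = n)
    (hm : 1 < m) (hn : 1 < n) (hmn : m + n = r + 1) :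
    TrcNumberIs (U1 ∪ U2)
      {e : Finset α | e ⊆ U1 ∪ U2 ∧ e.card = r ∧ (e ∩ U1).Nonempty ∧ (e ∩ U2).Nonempty}
      (r + 1) := by
  have hcard : #(U1 ∪ U2) = r + 1 := by rw [card_union_of_disjoint hd, h1, h2, hmn]
  rw [← hcard]
  apply trcNumberIs_card (by omega)
  · intro v hv
    exact not_isTransversal_of_disjoint_mem
      (sdiff_singleton_mem_bipartiteEdges (h1 ▸ hm) (h2 ▸ hn) hcard hv) disjoint_sdiff
  · intro v hv w hw hvw
    exact isTransversal_pair_of_card_lt (fun e he => ⟨he.1, by rw [hcard, he.2.1]; omega⟩) hv hw hvw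

theorem stmt11 {α : Type*} [DecidableEq α] (U1 U2 : Finset α) (m n r : ℕ)
    (hd : Disjoint U1 U2) (h1 : U1.card = m) (h2 : U2.card = n)
    (hr : 3 ≤ r) (hm : 1 < m) (hn : 1 < n) (hmn : m + n = r + 1) :
    TrcNumberIs (U1 ∪ U2)
      {e : Finset α | e ⊆ U1 ∪ U2 ∧ e.card = r ∧ (e ∩ U1).Nonempty ∧ (e ∩ U2).Nonempty}
      (r + 1) :=
  stmt11_general U1 U2 m n r hd h1 h2 hm hn hmn
end

section
/- For the complete bipartite r-uniform hypergraph K_{m,n}^r with r ≥ 3, m, n > 1, m + n > r + 1, and n = r − 1 (or symmetrically m = r − 1), the transversal coalition number is C_τ(K_{m,n}^r) = r + 1. -/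
open Finset

/-!
Every part has size at least one, so a coalition `p, q` whose union misses fewer than `r`
vertices leaves room for at most `r - 1` further parts. In `K_{m,n}^r` a set is a transversal
exactly when it contains `U1`, contains `U2`, or misses fewer than `r` vertices; with `n = r - 1`
containing `U1` already forces the latter. No singleton is a transversal, so if a partition had
`r + 2` parts, some coalition would have to contain `U2`; a third part then misses `U2`, and its
partner would have to contain `U2` alone, i.e. be a transversal itself. The bound `r + 1` is
attained by splitting off one vertex `b` of `U1` and taking `U1 \ {b}`, `{b}` and the singletons
of `U2`.
-/

section

variable {α : Type*} [DecidableEq α]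

namespace IsTrcPartition

variable {U : Finset α} {E : Set (Finset α)} {P : Finset (Finset α)}

theorem subset (hP : IsTrcPartition U E P) {p : Finset α} (hp : p ∈ P) : p ⊆ U :=
  hP.2.2.1 ▸ subset_biUnion_of_mem id hp

theorem disjoint_union (hP : IsTrcPartition U E P) {s p q : Finset α} (hs : s ∈ P) (hp : p ∈ P)
    (hq : q ∈ P) (hsp : s ≠ p) (hsq : s ≠ q) : Disjoint s (p ∪ q) :=
  disjoint_union_right.2 ⟨hP.2.1 s hs p hp hsp, hP.2.1 s hs q hq hsq⟩

theorem card_le_card_sdiff_union_add_two (hP : IsTrcPartition U E P) {p q : Finset α}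
    (hp : p ∈ P) (hq : q ∈ P) (hpq : p ≠ q) : P.card ≤ (U \ (p ∪ q)).card + 2 := by
  set rest := (P.erase p).erase q
  have hrest : rest ⊆ P := (erase_subset _ _).trans (erase_subset _ _)
  have hcard : rest.card + 2 = P.card := by
    rw [card_erase_of_mem (mem_erase.2 ⟨hpq.symm, hq⟩), card_erase_of_mem hp]
    have := card_le_card (insert_subset hp (singleton_subset_iff.2 hq))
    rw [card_pair hpq] at this
    omega
  have hle : rest.card ≤ (rest.biUnion id).card :=
    card_le_card_biUnion (fun s hs t ht hst => hP.2.1 s (hrest hs) t (hrest ht) hst)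
      fun s hs => hP.1 s (hrest hs)
  have hsub : rest.biUnion id ⊆ U \ (p ∪ q) := by
    refine biUnion_subset.2 fun s hs => subset_sdiff.2 ⟨hP.subset (hrest hs), ?_⟩
    exact hP.disjoint_union (hrest hs) hp hq (ne_of_mem_erase (mem_of_mem_erase hs))
      (ne_of_mem_erase hs)
  have := card_le_card hsub
  omega

end IsTrcPartition

theorem isTrcPartition_insert_image_singleton {U A S : Finset α} {E : Set (Finset α)}
    (hAS : Disjoint A S) (hU : A ∪ S = U) (hA : A.Nonempty) (hS : S.Nonempty)
    (hAnt : ¬IsTransversal E A) (hSnt : ∀ v ∈ S, ¬IsTransversal E {v})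
    (hcoal : ∀ v ∈ S, IsTransversal E (A ∪ {v})) :
    IsTrcPartition U E (insert A (S.image singleton)) := by
  have hne : ∀ v ∈ S, A ≠ {v} := fun v hv h =>
    disjoint_left.1 hAS (h ▸ mem_singleton_self v) hv
  refine ⟨?_, ?_, ?_, ?_⟩
  · simpa only [forall_mem_insert, forall_mem_image] using ⟨hA, fun v _ => singleton_nonempty v⟩
  · simp only [mem_insert, mem_image]
    rintro p (rfl | ⟨v, hv, rfl⟩) q (rfl | ⟨w, hw, rfl⟩) hpq
    · exact absurd rfl hpq
    · exact disjoint_singleton_right.2 (disjoint_right.1 hAS hw)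
    · exact disjoint_singleton_left.2 (disjoint_right.1 hAS hv)
    · exact disjoint_singleton.2 fun h => hpq (h ▸ rfl)
  · rw [biUnion_insert, image_biUnion, ← hU]
    exact congrArg (A ∪ ·) biUnion_singleton_eq_self
  · intro p hp
    rcases mem_insert.1 hp with rfl | hp
    · obtain ⟨v, hv⟩ := hS
      exact Or.inr ⟨hAnt, {v}, mem_insert_of_mem (mem_image_of_mem _ hv), (hne v hv).symm,
        hSnt v hv, hcoal v hv⟩
    · obtain ⟨v, hv, rfl⟩ := mem_image.1 hp
      exact Or.inr ⟨hSnt v hv, A, mem_insert_self _ _, hne v hv, hAnt,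
        union_comm A {v} ▸ hcoal v hv⟩

theorem card_insert_image_singleton {A S : Finset α} (hAS : Disjoint A S) :
    (insert A (S.image (singleton : α → Finset α))).card = S.card + 1 := by
  rw [card_insert_of_notMem, card_image_of_injective _ singleton_injective]
  intro h
  obtain ⟨v, hv, rfl⟩ := mem_image.1 h
  exact disjoint_left.1 hAS (mem_singleton_self v) hv

def completeBipartiteEdges (U1 U2 : Finset α) (r : ℕ) : Set (Finset α) :=
  {e | e ⊆ U1 ∪ U2 ∧ e.card = r ∧ (e ∩ U1).Nonempty ∧ (e ∩ U2).Nonempty}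

namespace completeBipartiteEdges

variable {U1 U2 T : Finset α} {r : ℕ}

theorem comm (U1 U2 : Finset α) (r : ℕ) :
    completeBipartiteEdges U2 U1 r = completeBipartiteEdges U1 U2 r := by
  ext e
  simp only [completeBipartiteEdges, Set.mem_ofPred_eq, union_comm U2 U1]
  tauto

theorem isTransversal_of_subset_left (h : U1 ⊆ T) :
    IsTransversal (completeBipartiteEdges U1 U2 r) T := fun _ he =>
  he.2.2.1.mono fun _ hx => mem_inter.2 ⟨h (mem_inter.1 hx).2, (mem_inter.1 hx).1⟩

theorem isTransversal_of_subset_right (h : U2 ⊆ T) :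
    IsTransversal (completeBipartiteEdges U1 U2 r) T := fun _ he =>
  he.2.2.2.mono fun _ hx => mem_inter.2 ⟨h (mem_inter.1 hx).2, (mem_inter.1 hx).1⟩

theorem isTransversal_of_card_sdiff_lt (h : ((U1 ∪ U2) \ T).card < r) :
    IsTransversal (completeBipartiteEdges U1 U2 r) T := by
  intro e he
  rw [← not_disjoint_iff_nonempty_inter]
  intro hTe
  have := card_le_card (subset_sdiff.2 ⟨he.1, hTe.symm⟩)
  rw [he.2.1] at this
  omega

theorem isTransversal_iff (hr : 2 ≤ r) :
    IsTransversal (completeBipartiteEdges U1 U2 r) T ↔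
      U1 ⊆ T ∨ U2 ⊆ T ∨ ((U1 ∪ U2) \ T).card < r := by
  refine ⟨fun hT => ?_, fun h => h.elim isTransversal_of_subset_left
    (Or.elim · isTransversal_of_subset_right isTransversal_of_card_sdiff_lt)⟩
  by_contra! h
  obtain ⟨⟨x, hx1, hxT⟩, ⟨y, hy2, hyT⟩, hc⟩ := And.imp not_subset.1 (And.imp_left not_subset.1) h
  -- an edge through `x ∈ U1` and `y ∈ U2` avoiding `T`
  have hxy : {x, y} ⊆ (U1 ∪ U2) \ T := by
    simp only [insert_subset_iff, singleton_subset_iff, mem_sdiff, mem_union]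
    exact ⟨⟨Or.inl hx1, hxT⟩, Or.inr hy2, hyT⟩
  obtain ⟨e, hxye, heU, he⟩ :=
    exists_subsuperset_card_eq hxy (card_le_two.trans hr) hc
  have heE : e ∈ completeBipartiteEdges U1 U2 r :=
    ⟨heU.trans sdiff_subset, he, ⟨x, mem_inter.2 ⟨hxye (mem_insert_self x _), hx1⟩⟩,
      ⟨y, mem_inter.2 ⟨hxye (mem_insert_of_mem (mem_singleton_self y)), hy2⟩⟩⟩
  obtain ⟨z, hz⟩ := hT e heE
  exact (mem_sdiff.1 (heU (mem_inter.1 hz).2)).2 (mem_inter.1 hz).1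

theorem not_isTransversal_singleton (hd : Disjoint U1 U2) (h1 : 2 ≤ U1.card) (h2 : 2 ≤ U2.card)
    (hr : 2 ≤ r) (hrU : r < U1.card + U2.card) (v : α) :
    ¬IsTransversal (completeBipartiteEdges U1 U2 r) {v} := by
  rw [isTransversal_iff hr]
  rintro (h | h | h)
  · have := card_le_card h
    rw [card_singleton] at this
    omega
  · have := card_le_card h
    rw [card_singleton] at this
    omega
  · have := card_le_card_sdiff_add_card (s := U1 ∪ U2) (t := {v})
    rw [card_union_of_disjoint hd, card_singleton] at this
    omega

theorem exists_isTrcPartition_card_eq (hd : Disjoint U1 U2) (h1 : 2 ≤ U1.card)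
    (h2 : 2 ≤ U2.card) (hr : U2.card + 1 = r) :
    ∃ P, IsTrcPartition (U1 ∪ U2) (completeBipartiteEdges U1 U2 r) P ∧ P.card = r + 1 := by
  obtain ⟨b, hb⟩ : U1.Nonempty := card_pos.1 (by omega)
  have hbU2 : b ∉ U2 := disjoint_left.1 hd hb
  set A := U1.erase b
  set S := insert b U2
  have hAS : Disjoint A S :=
    disjoint_insert_right.2 ⟨notMem_erase b U1, disjoint_of_subset_left (erase_subset b U1) hd⟩
  have hU : A ∪ S = U1 ∪ U2 := by rw [union_insert, ← insert_union, insert_erase hb]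
  have hS : S.card = r := by rw [card_insert_of_notMem hbU2, hr]
  refine ⟨_, isTrcPartition_insert_image_singleton hAS hU ?_ (insert_nonempty b U2) ?_
    (fun v _ => not_isTransversal_singleton hd h1 h2 (by omega) (by omega) v) ?_,
    by rw [card_insert_image_singleton hAS, hS]⟩
  · exact card_pos.1 (by rw [card_erase_of_mem hb]; omega)
  · rw [isTransversal_iff (by omega)]
    rintro (h | h | h)
    · exact notMem_erase b U1 (h hb)
    · obtain ⟨y, hy⟩ : U2.Nonempty := card_pos.1 (by omega)
      exact disjoint_left.1 hd (erase_subset b U1 (h hy)) hy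
    · rw [← hU, union_sdiff_cancel_left hAS] at h
      omega
  · intro v hv
    refine isTransversal_of_card_sdiff_lt ((card_le_card fun x hx => ?_).trans_lt
      (by rw [card_erase_of_mem hv, hS]; omega : (S.erase v).card < r))
    rw [← hU] at hx
    simp only [mem_sdiff, mem_union, mem_singleton, mem_erase] at hx ⊢
    tauto

theorem card_le_of_isTrcPartition (hd : Disjoint U1 U2) (h1 : 2 ≤ U1.card) (h2 : 2 ≤ U2.card)
    (hr : U2.card + 1 = r) {P : Finset (Finset α)}
    (hP : IsTrcPartition (U1 ∪ U2) (completeBipartiteEdges U1 U2 r) P) : P.card ≤ r + 1 := by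
  set E := completeBipartiteEdges U1 U2 r
  have hpartner : ∀ p ∈ P, ∃ q ∈ P, q ≠ p ∧ ¬IsTransversal E q ∧ IsTransversal E (p ∪ q) := by
    intro p hp
    rcases hP.2.2.2 p hp with ⟨v, rfl, hv⟩ | ⟨-, hq⟩
    · exact absurd hv (not_isTransversal_singleton hd h1 h2 (by omega) (by omega) v)
    · exact hq
  have hcoal : ∀ p ∈ P, ∀ q ∈ P, q ≠ p → IsTransversal E (p ∪ q) →
      U2 ⊆ p ∪ q ∨ P.card ≤ r + 1 := by
    intro p hp q hq hqp hpq
    have hbound := hP.card_le_card_sdiff_union_add_two hp hq hqp.symm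
    rcases (isTransversal_iff (by omega)).1 hpq with h | h | h
    · have := card_le_card
        (sdiff_le_iff.2 (union_subset_union h subset_rfl) : (U1 ∪ U2) \ (p ∪ q) ⊆ U2)
      omega
    · exact Or.inl h
    · omega
  by_contra! hlt
  obtain ⟨p, hp⟩ : P.Nonempty := card_pos.1 (by omega)
  obtain ⟨q, hq, hqp, -, hpq⟩ := hpartner p hp
  have hU2 : U2 ⊆ p ∪ q := (hcoal p hp q hq hqp hpq).resolve_right hlt.not_ge
  obtain ⟨s, hs, hsp⟩ := exists_mem_ne (s := P.erase q) (by rw [card_erase_of_mem hq]; omega) p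
  obtain ⟨hsq, hs⟩ := mem_erase.1 hs
  obtain ⟨t, ht, hts, hnt, hst⟩ := hpartner s hs
  have hsU2 : Disjoint U2 s := ((hP.disjoint_union hs hp hq hsp hsq).mono_right hU2).symm
  exact hnt (isTransversal_of_subset_right
    (Disjoint.left_le_of_le_sup_left ((hcoal s hs t ht hts hst).resolve_right hlt.not_ge) hsU2))

theorem trcNumberIs_of_card_add_one_eq (hd : Disjoint U1 U2) (h1 : 2 ≤ U1.card)
    (h2 : 2 ≤ U2.card) (hr : U2.card + 1 = r) :
    TrcNumberIs (U1 ∪ U2) (completeBipartiteEdges U1 U2 r) (r + 1) :=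
  ⟨exists_isTrcPartition_card_eq hd h1 h2 hr, by
    rintro k ⟨P, hP, rfl⟩
    exact card_le_of_isTrcPartition hd h1 h2 hr hP⟩

end completeBipartiteEdges

end

theorem stmt12_general {α : Type*} [DecidableEq α] (U1 U2 : Finset α) (m n r : ℕ)
    (hd : Disjoint U1 U2) (h1 : U1.card = m) (h2 : U2.card = n)
    (hm : 1 < m) (hn : 1 < n)
    (hcase : n = r - 1 ∨ m = r - 1) :
    TrcNumberIs (U1 ∪ U2)
      {e : Finset α | e ⊆ U1 ∪ U2 ∧ e.card = r ∧ (e ∩ U1).Nonempty ∧ (e ∩ U2).Nonempty}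
      (r + 1) := by
  subst h1 h2
  rcases hcase with hr | hr
  · exact completeBipartiteEdges.trcNumberIs_of_card_add_one_eq (r := r) hd hm hn (by omega)
  · have :=
      completeBipartiteEdges.trcNumberIs_of_card_add_one_eq (r := r) hd.symm hn hm (by omega)
    rwa [union_comm, completeBipartiteEdges.comm] at this

theorem stmt12 {α : Type*} [DecidableEq α] (U1 U2 : Finset α) (m n r : ℕ)
    (hd : Disjoint U1 U2) (h1 : U1.card = m) (h2 : U2.card = n)
    (hr : 3 ≤ r) (hm : 1 < m) (hn : 1 < n) (hmn : r + 1 < m + n)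
    (hcase : n = r - 1 ∨ m = r - 1) :
    TrcNumberIs (U1 ∪ U2)
      {e : Finset α | e ⊆ U1 ∪ U2 ∧ e.card = r ∧ (e ∩ U1).Nonempty ∧ (e ∩ U2).Nonempty}
      (r + 1) :=
  stmt12_general U1 U2 m n r hd h1 h2 hm hn hcase
end

section
/- For the complete r-partite r-uniform hypergraph K^r_{n_1,...,n_r} in which every part has size at least 2, the transversal coalition number equals 2r. -/
open Finset

/-!
A singleton never meets every edge, since each part has two vertices, so in a transversal
coalition partition every member `p` has a partner `q` with `p ∪ q ⊇ U_i` for some `i`, and `p`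
meets `U_i` because `q` does not contain it. Charging `p` to such an `i`, the members charged
to `i` all meet `U_i ⊆ p ∪ q` and hence lie in `{p, q}`: at most `2r` members in total.
Conversely, splitting every part into a vertex and the rest gives `2r` non-transversal pieces,
each paired with the other half of its own part.
-/

open Function

section

variable {ι α : Type*} [DecidableEq α]

theorem Finset.filter_inter_nonempty_subset_pair {P : Finset (Finset α)}
    (hP : (P : Set (Finset α)).PairwiseDisjoint id) {A p q : Finset α} (hp : p ∈ P)
    (hq : q ∈ P) (hA : A ⊆ p ∪ q) : {s ∈ P | (s ∩ A).Nonempty} ⊆ {p, q} := by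
  intro s hs
  obtain ⟨hsP, x, hx⟩ := mem_filter.mp hs
  rw [mem_inter] at hx
  by_contra hne
  simp only [mem_insert, mem_singleton, not_or] at hne
  rcases mem_union.mp (hA hx.2) with hxp | hxq
  · exact disjoint_left.mp (hP hsP hp hne.1) hx.1 hxp
  · exact disjoint_left.mp (hP hsP hq hne.2) hx.1 hxq

theorem Finset.singleton_ne_erase (a : α) (s : Finset α) : {a} ≠ s.erase a :=
  fun h => notMem_erase a s (h ▸ mem_singleton_self a)

theorem Finset.singleton_union_erase {s : Finset α} {a : α} (ha : a ∈ s) :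
    {a} ∪ s.erase a = s := by
  rw [← insert_eq, insert_erase ha]

theorem Finset.nonempty_and_ssubset_of_mem_pair_singleton_erase {s p : Finset α} {a : α}
    (hs : s.Nontrivial) (ha : a ∈ s) (hp : p ∈ ({{a}, s.erase a} : Finset (Finset α))) :
    p.Nonempty ∧ p ⊂ s := by
  rcases mem_insert.mp hp with rfl | hp
  · exact ⟨singleton_nonempty a,
      ssubset_of_subset_of_ne (singleton_subset_iff.mpr ha) hs.ne_singleton.symm⟩
  · rw [mem_singleton.mp hp]
    exact ⟨(erase_nonempty ha).mpr hs, erase_ssubset ha⟩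

theorem IsTrcPartition.exists_coalition {U : Finset α} {E : Set (Finset α)}
    {P : Finset (Finset α)} (hP : IsTrcPartition U E P) (hsingle : ∀ v, ¬ IsTransversal E {v})
    {p : Finset α} (hp : p ∈ P) :
    ∃ q ∈ P, ¬ IsTransversal E q ∧ IsTransversal E (p ∪ q) := by
  rcases hP.2.2.2 p hp with ⟨v, rfl, hv⟩ | ⟨-, q, hq, -, hqE, hpqE⟩
  · exact absurd hv (hsingle v)
  · exact ⟨q, hq, hqE, hpqE⟩

variable [Fintype ι] (parts : ι → Finset α)

def partiteEdges : Set (Finset α) :=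
  {e | ∃ f : ι → α, (∀ i, f i ∈ parts i) ∧ e = image f univ}

theorem isTransversal_partiteEdges_iff {T : Finset α} :
    IsTransversal (partiteEdges parts) T ↔ ∃ i, parts i ⊆ T := by
  constructor
  · intro hT
    by_contra! hout
    choose f hf hfT using fun i => not_subset.mp (hout i)
    obtain ⟨x, hx⟩ := hT _ ⟨f, hf, rfl⟩
    obtain ⟨hxT, i, -, rfl⟩ := mem_inter.mp hx |>.imp_right mem_image.mp
    exact hfT i hxT
  · rintro ⟨i, hi⟩ e ⟨f, hf, rfl⟩
    exact ⟨f i, mem_inter.mpr ⟨hi (hf i), mem_image_of_mem f (mem_univ i)⟩⟩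

variable {parts}

theorem not_isTransversal_partiteEdges_singleton (hnt : ∀ i, (parts i).Nontrivial) (v : α) :
    ¬ IsTransversal (partiteEdges parts) {v} := fun hv => by
  obtain ⟨i, hi⟩ := (isTransversal_partiteEdges_iff parts).mp hv
  exact (hnt i).not_subset_singleton hi

theorem not_isTransversal_partiteEdges_of_ssubset (hdisj : Pairwise (Disjoint on parts))
    (hne : ∀ i, (parts i).Nonempty) {p : Finset α} {i : ι} (hpi : p ⊂ parts i) :
    ¬ IsTransversal (partiteEdges parts) p := fun hp => by
  obtain ⟨j, hj⟩ := (isTransversal_partiteEdges_iff parts).mp hp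
  obtain rfl | hij := eq_or_ne j i
  · exact hpi.2 hj
  · obtain ⟨x, hx⟩ := hne j
    exact disjoint_left.mp (hdisj hij) hx (hpi.1 (hj hx))

theorem IsTrcPartition.exists_partner_covering_part {U : Finset α} {P : Finset (Finset α)}
    (hP : IsTrcPartition U (partiteEdges parts) P) (hnt : ∀ i, (parts i).Nontrivial)
    {p : Finset α} (hp : p ∈ P) :
    ∃ i, (p ∩ parts i).Nonempty ∧ ∃ q ∈ P, parts i ⊆ p ∪ q := by
  obtain ⟨q, hq, hqE, hpqE⟩ :=
    hP.exists_coalition (not_isTransversal_partiteEdges_singleton hnt) hp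
  obtain ⟨i, hi⟩ := (isTransversal_partiteEdges_iff parts).mp hpqE
  have hqi : ¬ parts i ⊆ q := fun h =>
    hqE ((isTransversal_partiteEdges_iff parts).mpr ⟨i, h⟩)
  obtain ⟨x, hx, hxq⟩ := not_subset.mp hqi
  have hxp : x ∈ p := (mem_union.mp (hi hx)).resolve_right hxq
  exact ⟨i, ⟨x, mem_inter.mpr ⟨hxp, hx⟩⟩, q, hq, hi⟩

theorem IsTrcPartition.card_le_two_mul {U : Finset α} {P : Finset (Finset α)}
    (hP : IsTrcPartition U (partiteEdges parts) P) (hnt : ∀ i, (parts i).Nontrivial) :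
    #P ≤ 2 * Fintype.card ι := by
  set charged : ι → Finset (Finset α) :=
    fun i => {p ∈ P | (p ∩ parts i).Nonempty ∧ ∃ q ∈ P, parts i ⊆ p ∪ q}
  have hcover : P ⊆ univ.biUnion charged := fun p hp => by
    obtain ⟨i, hi⟩ := hP.exists_partner_covering_part hnt hp
    exact mem_biUnion.mpr ⟨i, mem_univ i, mem_filter.mpr ⟨hp, hi⟩⟩
  have hcharged : ∀ i, #(charged i) ≤ 2 := fun i => by
    obtain hempty | ⟨p, hp⟩ := (charged i).eq_empty_or_nonempty
    · simp [hempty]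
    obtain ⟨hpP, -, q, hq, hcover⟩ := mem_filter.mp hp
    have hsub : charged i ⊆ {s ∈ P | (s ∩ parts i).Nonempty} :=
      fun s hs => mem_filter.mpr ⟨(mem_filter.mp hs).1, (mem_filter.mp hs).2.1⟩
    exact (card_le_card (hsub.trans
      (filter_inter_nonempty_subset_pair hP.2.1 hpP hq hcover))).trans card_le_two
  calc #P ≤ #(univ.biUnion charged) := card_le_card hcover
    _ ≤ ∑ i, #(charged i) := card_biUnion_le
    _ ≤ ∑ _i : ι, 2 := sum_le_sum fun i _ => hcharged i
    _ = 2 * Fintype.card ι := by simp [mul_comm]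

def splitParts (parts : ι → Finset α) (u : ι → α) : Finset (Finset α) :=
  univ.biUnion fun i => {{u i}, (parts i).erase (u i)}

variable {u : ι → α}

theorem mem_splitParts {p : Finset α} :
    p ∈ splitParts parts u ↔
      ∃ i, p ∈ ({{u i}, (parts i).erase (u i)} : Finset (Finset α)) := by
  simp [splitParts]

theorem biUnion_splitParts (hu : ∀ i, u i ∈ parts i) :
    (splitParts parts u).biUnion id = univ.biUnion parts := by
  simp [splitParts, biUnion_biUnion, singleton_union_erase (hu _)]

theorem pairwiseDisjoint_splitParts (hdisj : Pairwise (Disjoint on parts))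
    (hnt : ∀ i, (parts i).Nontrivial) (hu : ∀ i, u i ∈ parts i) :
    (splitParts parts u : Set (Finset α)).PairwiseDisjoint id := by
  intro p hp q hq hpq
  obtain ⟨i, hpi⟩ := mem_splitParts.mp hp
  obtain ⟨j, hqj⟩ := mem_splitParts.mp hq
  obtain rfl | hij := eq_or_ne i j
  · simp only [mem_insert, mem_singleton] at hpi hqj
    rcases hpi with rfl | rfl <;> rcases hqj with rfl | rfl
    all_goals first
      | exact absurd rfl hpq
      | exact disjoint_singleton_left.mpr (notMem_erase _ _)
      | exact disjoint_singleton_right.mpr (notMem_erase _ _)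
  · exact (hdisj hij).mono
      (nonempty_and_ssubset_of_mem_pair_singleton_erase (hnt i) (hu i) hpi).2.1
      (nonempty_and_ssubset_of_mem_pair_singleton_erase (hnt j) (hu j) hqj).2.1

theorem card_splitParts (hdisj : Pairwise (Disjoint on parts)) (hnt : ∀ i, (parts i).Nontrivial)
    (hu : ∀ i, u i ∈ parts i) : #(splitParts parts u) = 2 * Fintype.card ι := by
  rw [splitParts, card_biUnion]
  · simp [card_pair (singleton_ne_erase _ _), mul_comm]
  · intro i _ j _ hij
    refine disjoint_left.mpr fun p hpi hpj => ?_
    obtain ⟨⟨x, hx⟩, hpi⟩ :=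
      nonempty_and_ssubset_of_mem_pair_singleton_erase (hnt i) (hu i) hpi
    exact disjoint_left.mp (hdisj hij) (hpi.1 hx)
      ((nonempty_and_ssubset_of_mem_pair_singleton_erase (hnt j) (hu j) hpj).2.1 hx)

theorem isTrcPartition_splitParts (hdisj : Pairwise (Disjoint on parts))
    (hnt : ∀ i, (parts i).Nontrivial) (hu : ∀ i, u i ∈ parts i) :
    IsTrcPartition (univ.biUnion parts) (partiteEdges parts) (splitParts parts u) := by
  refine ⟨fun p hp => ?_, pairwiseDisjoint_splitParts hdisj hnt hu, biUnion_splitParts hu,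
    fun p hp => Or.inr ?_⟩
  · obtain ⟨i, hpi⟩ := mem_splitParts.mp hp
    exact (nonempty_and_ssubset_of_mem_pair_singleton_erase (hnt i) (hu i) hpi).1
  obtain ⟨i, hpi⟩ := mem_splitParts.mp hp
  have hnot {s} (hs : s ∈ ({{u i}, (parts i).erase (u i)} : Finset (Finset α))) :
      ¬ IsTransversal (partiteEdges parts) s :=
    not_isTransversal_partiteEdges_of_ssubset hdisj (fun j => (hnt j).nonempty)
      (nonempty_and_ssubset_of_mem_pair_singleton_erase (hnt i) (hu i) hs).2
  have hpartner : ∃ q ∈ ({{u i}, (parts i).erase (u i)} : Finset (Finset α)),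
      q ≠ p ∧ parts i ⊆ p ∪ q := by
    rcases mem_insert.mp hpi with rfl | hpi
    · exact ⟨(parts i).erase (u i), by simp, (singleton_ne_erase _ _).symm,
        (singleton_union_erase (hu i)).ge⟩
    · rw [mem_singleton.mp hpi]
      exact ⟨{u i}, by simp, singleton_ne_erase _ _,
        union_comm {u i} _ ▸ (singleton_union_erase (hu i)).ge⟩
  obtain ⟨q, hqi, hqp, hpq⟩ := hpartner
  exact ⟨hnot hpi, q, mem_splitParts.mpr ⟨i, hqi⟩, hqp, hnot hqi,
    (isTransversal_partiteEdges_iff parts).mpr ⟨i, hpq⟩⟩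

end

theorem stmt14 {α : Type*} [DecidableEq α] (r : ℕ) (parts : Fin r → Finset α)
    (hdisj : ∀ i j, i ≠ j → Disjoint (parts i) (parts j))
    (hcard : ∀ i, 2 ≤ (parts i).card) :
    TrcNumberIs (Finset.univ.biUnion parts)
      {e : Finset α | ∃ f : Fin r → α, (∀ i, f i ∈ parts i) ∧
        e = Finset.image f Finset.univ} (2 * r) := by
  change TrcNumberIs _ (partiteEdges parts) _
  have hnt i : (parts i).Nontrivial := one_lt_card_iff_nontrivial.mp (hcard i)
  choose u hu using fun i => (hnt i).nonempty
  refine ⟨⟨splitParts parts u, isTrcPartition_splitParts hdisj hnt hu, ?_⟩, ?_⟩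
  · rw [card_splitParts hdisj hnt hu, Fintype.card_fin]
  · rintro m ⟨P, hP, rfl⟩
    simpa using hP.card_le_two_mul hnt
end
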